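/- arXiv:2601.04101 — 5 statements merged into one kernel-verified Lean document; each statement's English description precedes it below -/
import Mathlib

section
/- Let B = (d_{ij}) be an n×p matrix with nonnegative entries, let λ_w ≥ 0 and λ_f > 0 with d_{i·} + λ_w > 0 for all i, and set E_λ = D_{w,λ}^{-1/2} B D_{f,λ}^{-1/2} and L_{f,λ} = I_p − E_λ^⊤E_λ. Then the smallest eigenvalue of L_{f,λ} satisfies eigmin(L_{f,λ}) ≥ λ_f / (max_j d_{·j} + λ_f) > 0, and consequently the spectral norm of E_λ satisfies ‖E_λ‖ = √(eigmax(E_λ^⊤E_λ)) ≤ √( max_j d_{·j} / (max_j d_{·j} + λ_f) ) < 1. -/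
open Matrix BigOperators

/-- Spectral (ℓ2 operator) norm of a real matrix. -/
noncomputable def specNorm {m n : ℕ} (A : Matrix (Fin m) (Fin n) ℝ) : ℝ :=
  ‖LinearMap.toContinuousLinearMap (Matrix.toEuclideanLin A)‖

/-!
Put `y_j = x_j / √(d_{·j} + λ_f)`. Row by row, weighted Cauchy–Schwarz and `d_{i·} ≤ d_{i·} + λ_w`
give `(E_λ x)_i² ≤ Σ_j d_{ij} y_j²`; summing over `i` turns the row weights into column sums, so
`‖E_λ x‖² ≤ Σ_j d_{·j}/(d_{·j} + λ_f) · x_j² ≤ c ‖x‖²` with `c = max_j d_{·j}/(max_j d_{·j} + λ_f)`.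
This Rayleigh-quotient bound gives both `eigmin(I − E_λ^⊤E_λ) ≥ 1 − c = λ_f/(max_j d_{·j} + λ_f)`
and `‖E_λ‖ ≤ √c`.
-/

open Finset

theorem sq_sum_mul_le_sum_mul_sum_mul_sq {ι : Type*} (s : Finset ι) {w : ι → ℝ}
    (hw : ∀ i ∈ s, 0 ≤ w i) (y : ι → ℝ) :
    (∑ i ∈ s, w i * y i) ^ 2 ≤ (∑ i ∈ s, w i) * ∑ i ∈ s, w i * y i ^ 2 :=
  sum_sq_le_sum_mul_sum_of_sq_le_mul s hw (fun i hi => mul_nonneg (hw i hi) (sq_nonneg _))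
    fun i _ => (by ring : (w i * y i) ^ 2 = w i * (w i * y i ^ 2)).le

section Normalization

variable {ι κ : Type*} [Fintype ι] [Fintype κ] [DecidableEq ι] [DecidableEq κ]

noncomputable def diagSqrtNormalize (r : ι → ℝ) (B : Matrix ι κ ℝ) (s : κ → ℝ) : Matrix ι κ ℝ :=
  diagonal (fun i => 1 / √(r i)) * B * diagonal (fun j => 1 / √(s j))

theorem diagSqrtNormalize_mulVec_apply (r : ι → ℝ) (B : Matrix ι κ ℝ) (s : κ → ℝ)
    (x : κ → ℝ) (i : ι) :
    (diagSqrtNormalize r B s *ᵥ x) i = (√(r i))⁻¹ * ∑ j, B i j * (x j / √(s j)) := by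
  simp only [diagSqrtNormalize, mulVec, dotProduct, mul_diagonal, diagonal_mul, mul_sum]
  exact sum_congr rfl fun j _ => by ring

variable {B : Matrix ι κ ℝ} {r : ι → ℝ} {s : κ → ℝ}

theorem sq_diagSqrtNormalize_mulVec_apply_le (hB : ∀ i j, 0 ≤ B i j) (hr : ∀ i, 0 < r i)
    (hrow : ∀ i, ∑ j, B i j ≤ r i) (hs : ∀ j, 0 < s j) (x : κ → ℝ) (i : ι) :
    ((diagSqrtNormalize r B s *ᵥ x) i) ^ 2 ≤ ∑ j, B i j * (x j ^ 2 / s j) := by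
  set S := ∑ j, B i j * (x j ^ 2 / s j)
  have hS : 0 ≤ S := sum_nonneg fun j _ => mul_nonneg (hB i j) (div_nonneg (sq_nonneg _) (hs j).le)
  have hCS : (∑ j, B i j * (x j / √(s j))) ^ 2 ≤ (∑ j, B i j) * S := by
    convert sq_sum_mul_le_sum_mul_sum_mul_sq univ (fun j _ => hB i j) (fun j => x j / √(s j))
      using 3 with j
    rw [div_pow, Real.sq_sqrt (hs j).le]
  calc ((diagSqrtNormalize r B s *ᵥ x) i) ^ 2
      = (∑ j, B i j * (x j / √(s j))) ^ 2 / r i := by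
        rw [diagSqrtNormalize_mulVec_apply, mul_pow, inv_pow, Real.sq_sqrt (hr i).le,
          inv_mul_eq_div]
    _ ≤ r i * S / r i :=
        div_le_div_of_nonneg_right (hCS.trans (mul_le_mul_of_nonneg_right (hrow i) hS)) (hr i).le
    _ = S := by field_simp [(hr i).ne']

theorem diagSqrtNormalize_mulVec_dotProduct_self_le (hB : ∀ i j, 0 ≤ B i j)
    (hr : ∀ i, 0 < r i) (hrow : ∀ i, ∑ j, B i j ≤ r i) (hs : ∀ j, 0 < s j) (x : κ → ℝ) :
    diagSqrtNormalize r B s *ᵥ x ⬝ᵥ diagSqrtNormalize r B s *ᵥ x ≤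
      ∑ j, (∑ i, B i j) / s j * x j ^ 2 :=
  calc _ = ∑ i, ((diagSqrtNormalize r B s *ᵥ x) i) ^ 2 := by simp only [dotProduct, sq]
    _ ≤ ∑ i, ∑ j, B i j * (x j ^ 2 / s j) :=
        sum_le_sum fun i _ => sq_diagSqrtNormalize_mulVec_apply_le hB hr hrow hs x i
    _ = ∑ j, (∑ i, B i j) / s j * x j ^ 2 := by
        rw [sum_comm]
        exact sum_congr rfl fun j _ => by rw [← sum_mul]; ring

end Normalization

section RayleighBound

variable {ι κ : Type*} [Fintype ι] [Fintype κ] {A : Matrix ι κ ℝ} {c : ℝ}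

theorem one_sub_le_of_mulVec_one_sub_transpose_mul_self_eq_smul [DecidableEq κ]
    (hA : ∀ x, A *ᵥ x ⬝ᵥ A *ᵥ x ≤ c * (x ⬝ᵥ x)) {μ : ℝ} {x : κ → ℝ} (hx : x ≠ 0)
    (hμ : (1 - Aᵀ * A) *ᵥ x = μ • x) : 1 - c ≤ μ := by
  have hpos : 0 < x ⬝ᵥ x :=
    (dotProduct_self_star_nonneg x).lt_of_ne' (dotProduct_self_eq_zero.not.2 hx)
  have hquad : x ⬝ᵥ (1 - Aᵀ * A) *ᵥ x = x ⬝ᵥ x - A *ᵥ x ⬝ᵥ A *ᵥ x := by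
    rw [sub_mulVec, one_mulVec, dotProduct_sub, ← mulVec_mulVec, dotProduct_mulVec,
      vecMul_transpose]
  have : (1 - c) * (x ⬝ᵥ x) ≤ μ * (x ⬝ᵥ x) := by
    rw [← smul_eq_mul μ, ← dotProduct_smul, ← hμ, hquad]
    linarith [hA x]
  exact le_of_mul_le_mul_right this hpos

theorem specNorm_le_sqrt {m n : ℕ} {A : Matrix (Fin m) (Fin n) ℝ} (hc : 0 ≤ c)
    (hA : ∀ x, A *ᵥ x ⬝ᵥ A *ᵥ x ≤ c * (x ⬝ᵥ x)) : specNorm A ≤ √c := by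
  have norm_sq {k : ℕ} (v : EuclideanSpace ℝ (Fin k)) : ‖v‖ ^ 2 = v.ofLp ⬝ᵥ v.ofLp := by
    rw [← real_inner_self_eq_norm_sq, EuclideanSpace.inner_eq_star_dotProduct, star_trivial]
  refine ContinuousLinearMap.opNorm_le_bound _ (Real.sqrt_nonneg c) fun x => ?_
  refine (pow_le_pow_iff_left₀ (norm_nonneg _) (by positivity) two_ne_zero).1 ?_
  rw [mul_pow, Real.sq_sqrt hc, norm_sq, norm_sq]
  exact hA x.ofLp

end RayleighBound

theorem div_add_le_div_add {a b l : ℝ} (ha : 0 ≤ a) (hab : a ≤ b) (hl : 0 < l) :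
    a / (a + l) ≤ b / (b + l) := by
  rw [div_le_div_iff₀ (by positivity) (by linarith)]
  nlinarith

theorem stmt_2_general (n p : ℕ) (hp : 0 < p)
    (B : Matrix (Fin n) (Fin p) ℝ) (hB : ∀ i j, 0 ≤ B i j)
    (lamw lamf : ℝ) (hlamw : 0 ≤ lamw) (hlamf : 0 < lamf)
    (drow : Fin n → ℝ) (hdrow : ∀ i, drow i = ∑ j, B i j)
    (dcol : Fin p → ℝ) (hdcol : ∀ j, dcol j = ∑ i, B i j)
    (hrowpos : ∀ i, 0 < drow i + lamw)
    (Elam : Matrix (Fin n) (Fin p) ℝ)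
    (hElam : Elam = Matrix.diagonal (fun i => 1 / Real.sqrt (drow i + lamw)) * B *
      Matrix.diagonal (fun j => 1 / Real.sqrt (dcol j + lamf)))
    (Lfl : Matrix (Fin p) (Fin p) ℝ) (hLfl : Lfl = 1 - Elamᵀ * Elam)
    (maxd : ℝ) (hmaxd : maxd = Finset.univ.sup' ⟨⟨0, hp⟩, Finset.mem_univ _⟩ dcol) :
    (∀ (μ : ℝ) (x : Fin p → ℝ), x ≠ 0 → Lfl.mulVec x = μ • x →
      lamf / (maxd + lamf) ≤ μ) ∧
    0 < lamf / (maxd + lamf) ∧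
    specNorm Elam ≤ Real.sqrt (maxd / (maxd + lamf)) ∧
    Real.sqrt (maxd / (maxd + lamf)) < 1 := by
  have hdcol_nonneg (j : Fin p) : 0 ≤ dcol j := hdcol j ▸ sum_nonneg fun i _ => hB i j
  have hle_maxd (j : Fin p) : dcol j ≤ maxd := hmaxd ▸ le_sup' dcol (mem_univ j)
  have hmaxd_nonneg : 0 ≤ maxd := (hdcol_nonneg ⟨0, hp⟩).trans (hle_maxd _)
  have hden : 0 < maxd + lamf := by linarith
  have hc : 0 ≤ maxd / (maxd + lamf) := by positivity
  have hrayleigh (x : Fin p → ℝ) :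
      Elam *ᵥ x ⬝ᵥ Elam *ᵥ x ≤ maxd / (maxd + lamf) * (x ⬝ᵥ x) := by
    subst hElam
    refine (diagSqrtNormalize_mulVec_dotProduct_self_le hB hrowpos
      (fun i => by linarith [hdrow i]) (fun j => by linarith [hdcol_nonneg j]) x).trans ?_
    simp only [dotProduct, mul_sum, ← sq, ← hdcol]
    exact sum_le_sum fun j _ => mul_le_mul_of_nonneg_right
      (div_add_le_div_add (hdcol_nonneg j) (hle_maxd j) hlamf) (sq_nonneg _)
  have hgap : 1 - maxd / (maxd + lamf) = lamf / (maxd + lamf) := by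
    field_simp
    ring
  refine ⟨fun μ x hx hμ => ?_, div_pos hlamf hden, specNorm_le_sqrt hc hrayleigh,
    (Real.sqrt_lt' one_pos).2 ?_⟩
  · rw [← hgap]
    exact one_sub_le_of_mulVec_one_sub_transpose_mul_self_eq_smul hrayleigh hx (hLfl ▸ hμ)
  · rw [one_pow, div_lt_one hden]
    linarith

/-- with `λ_f > 0`, the smallest eigenvalue of the regularized firm
Laplacian `L_{f,λ} = I − E_λ^⊤E_λ` is at least `λ_f/(max_j d_{·j} + λ_f) > 0`, and
`‖E_λ‖ ≤ √(max_j d_{·j}/(max_j d_{·j} + λ_f)) < 1`. -/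
theorem stmt_2 (n p : ℕ) (hn : 0 < n) (hp : 0 < p)
    (B : Matrix (Fin n) (Fin p) ℝ) (hB : ∀ i j, 0 ≤ B i j)
    (lamw lamf : ℝ) (hlamw : 0 ≤ lamw) (hlamf : 0 < lamf)
    (drow : Fin n → ℝ) (hdrow : ∀ i, drow i = ∑ j, B i j)
    (dcol : Fin p → ℝ) (hdcol : ∀ j, dcol j = ∑ i, B i j)
    (hrowpos : ∀ i, 0 < drow i + lamw)
    (Elam : Matrix (Fin n) (Fin p) ℝ)
    (hElam : Elam = Matrix.diagonal (fun i => 1 / Real.sqrt (drow i + lamw)) * B *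
      Matrix.diagonal (fun j => 1 / Real.sqrt (dcol j + lamf)))
    (Lfl : Matrix (Fin p) (Fin p) ℝ) (hLfl : Lfl = 1 - Elamᵀ * Elam)
    (maxd : ℝ) (hmaxd : maxd = Finset.univ.sup' ⟨⟨0, hp⟩, Finset.mem_univ _⟩ dcol) :
    (∀ (μ : ℝ) (x : Fin p → ℝ), x ≠ 0 → Lfl.mulVec x = μ • x →
      lamf / (maxd + lamf) ≤ μ) ∧
    0 < lamf / (maxd + lamf) ∧
    specNorm Elam ≤ Real.sqrt (maxd / (maxd + lamf)) ∧
    Real.sqrt (maxd / (maxd + lamf)) < 1 :=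
  stmt_2_general n p hp B hB lamw lamf hlamw hlamf drow hdrow dcol hdcol hrowpos Elam hElam Lfl hLfl
    maxd hmaxd
end

section
/- Let B = (d_{ij}) be an n×p matrix with nonnegative entries and λ_w, λ_f > 0. Then for every x = (x_j) ∈ ℝ^p, x^⊤ L_{f,λ} x = (1/2) Σ_i (1/(d_{i·}+λ_w)) Σ_{j,j'} ( x_j/√(d_{·j}+λ_f) − x_{j'}/√(d_{·j'}+λ_f) )² d_{ij} d_{ij'} + Σ_j ( x_j² / (d_{·j}+λ_f) ) ( λ_f + λ_w Σ_i d_{ij}/(d_{i·}+λ_w) ), and hence x^⊤ L_{f,λ} x ≥ λ_f Σ_j x_j²/(d_{·j}+λ_f) ≥ λ_f ‖x‖² / (max_j d_{·j} + λ_f). -/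
open Matrix BigOperators

lemma sum_pair {p : ℕ} (b y : Fin p → ℝ) :
    ∑ j, ∑ j', (y j - y j')^2 * (b j * b j')
      = 2 * ((∑ j, y j^2 * b j) * (∑ j, b j)) - 2 * (∑ j, b j * y j)^2 := by
  have h1 : ∑ j, ∑ j', (y j - y j')^2 * (b j * b j')
      = ∑ j, ∑ j', ((y j^2 * b j) * b j' + b j * (y j'^2 * b j')
          - (2 * (b j * y j)) * (b j' * y j')) :=
    Finset.sum_congr rfl fun j _ => Finset.sum_congr rfl fun j' _ => by ring
  rw [h1]
  simp only [Finset.sum_add_distrib, Finset.sum_sub_distrib, ← Finset.mul_sum, ← Finset.sum_mul]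
  ring

/-- quadratic form identity for the regularized firm Laplacian
`L_{f,λ} = I − E_λ^⊤E_λ` with `λ_w, λ_f > 0`, and the resulting lower bounds. -/
theorem stmt_4 (n p : ℕ) (hn : 0 < n) (hp : 0 < p)
    (B : Matrix (Fin n) (Fin p) ℝ) (hB : ∀ i j, 0 ≤ B i j)
    (lamw lamf : ℝ) (hlamw : 0 < lamw) (hlamf : 0 < lamf)
    (drow : Fin n → ℝ) (hdrow : ∀ i, drow i = ∑ j, B i j)
    (dcol : Fin p → ℝ) (hdcol : ∀ j, dcol j = ∑ i, B i j)
    (Elam : Matrix (Fin n) (Fin p) ℝ)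
    (hElam : Elam = Matrix.diagonal (fun i => 1 / Real.sqrt (drow i + lamw)) * B *
      Matrix.diagonal (fun j => 1 / Real.sqrt (dcol j + lamf)))
    (Lfl : Matrix (Fin p) (Fin p) ℝ) (hLfl : Lfl = 1 - Elamᵀ * Elam)
    (maxd : ℝ) (hmaxd : maxd = Finset.univ.sup' ⟨⟨0, hp⟩, Finset.mem_univ _⟩ dcol) :
    ∀ x : Fin p → ℝ,
      (x ⬝ᵥ Lfl.mulVec x
        = (1 / 2) * ∑ i, (1 / (drow i + lamw)) *
            ∑ j, ∑ j', (x j / Real.sqrt (dcol j + lamf) -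
              x j' / Real.sqrt (dcol j' + lamf)) ^ 2 * (B i j * B i j')
          + ∑ j, (x j ^ 2 / (dcol j + lamf)) *
              (lamf + lamw * ∑ i, B i j / (drow i + lamw))) ∧
      lamf * ∑ j, x j ^ 2 / (dcol j + lamf) ≤ x ⬝ᵥ Lfl.mulVec x ∧
      lamf * (∑ j, x j ^ 2) / (maxd + lamf) ≤ lamf * ∑ j, x j ^ 2 / (dcol j + lamf) := by
  intro x
  have hrowpos : ∀ i, 0 < drow i + lamw := fun i => by
    have : 0 ≤ drow i := by rw [hdrow]; exact Finset.sum_nonneg fun j _ => hB i j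
    linarith
  have hcolpos : ∀ j, 0 < dcol j + lamf := fun j => by
    have : 0 ≤ dcol j := by rw [hdcol]; exact Finset.sum_nonneg fun i _ => hB i j
    linarith
  set y : Fin p → ℝ := fun j => x j / Real.sqrt (dcol j + lamf) with hy
  have hsq : ∀ j, Real.sqrt (dcol j + lamf) ^ 2 = dcol j + lamf := fun j =>
    Real.sq_sqrt (hcolpos j).le
  have hsfpos : ∀ j, 0 < Real.sqrt (dcol j + lamf) := fun j => Real.sqrt_pos.mpr (hcolpos j)
  have hxy : ∀ j, x j ^ 2 = y j ^ 2 * (dcol j + lamf) := fun j => by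
    rw [hy]
    simp only []
    rw [div_pow, hsq j, div_mul_cancel₀ _ (hcolpos j).ne']
  have hyx : ∀ j, x j ^ 2 / (dcol j + lamf) = y j ^ 2 := fun j => by
    rw [hxy j, mul_div_cancel_right₀ _ (hcolpos j).ne']
  -- entries of Elam
  have hEapp : ∀ i j, Elam i j = 1 / Real.sqrt (drow i + lamw) * B i j *
      (1 / Real.sqrt (dcol j + lamf)) := fun i j => by
    rw [hElam]
    simp [Matrix.mul_apply, Matrix.diagonal, Finset.sum_ite_eq, mul_comm]
  -- quadratic form
  have hEx : ∀ i, Elam.mulVec x i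
      = (∑ j, B i j * y j) * (1 / Real.sqrt (drow i + lamw)) := fun i => by
    simp only [Matrix.mulVec, dotProduct, hEapp, Finset.sum_mul]
    refine Finset.sum_congr rfl fun j _ => ?_
    rw [hy]; field_simp
  have hquad : x ⬝ᵥ Lfl.mulVec x
      = (∑ j, x j ^ 2) - ∑ i, (∑ j, B i j * y j) ^ 2 / (drow i + lamw) := by
    rw [hLfl, Matrix.sub_mulVec, dotProduct_sub, Matrix.one_mulVec,
      ← Matrix.mulVec_mulVec, Matrix.dotProduct_mulVec, Matrix.vecMul_transpose]
    congr 1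
    · simp [dotProduct, sq]
    · simp only [dotProduct, hEx]
      refine Finset.sum_congr rfl fun i _ => ?_
      have hs : Real.sqrt (drow i + lamw) ^ 2 = drow i + lamw := Real.sq_sqrt (hrowpos i).le
      rw [show (∑ j, B i j * y j) * (1 / Real.sqrt (drow i + lamw)) *
          ((∑ j, B i j * y j) * (1 / Real.sqrt (drow i + lamw)))
          = (∑ j, B i j * y j) ^ 2 * (1 / Real.sqrt (drow i + lamw)) ^ 2 from by ring,
        div_pow, one_pow, hs, mul_one_div]
  -- the key identity
  have hTi : ∀ i, ∑ j, ∑ j', (x j / Real.sqrt (dcol j + lamf) -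
        x j' / Real.sqrt (dcol j' + lamf)) ^ 2 * (B i j * B i j')
      = 2 * ((∑ j, y j ^ 2 * B i j) * (∑ j, B i j)) - 2 * (∑ j, B i j * y j) ^ 2 :=
    fun i => sum_pair (fun j => B i j) y
  have h2 : (1 / 2 : ℝ) * ∑ i, (1 / (drow i + lamw)) *
        ∑ j, ∑ j', (x j / Real.sqrt (dcol j + lamf) -
          x j' / Real.sqrt (dcol j' + lamf)) ^ 2 * (B i j * B i j')
      = ∑ i, ((∑ j, y j ^ 2 * B i j) * (∑ j, B i j) / (drow i + lamw)
          - (∑ j, B i j * y j) ^ 2 / (drow i + lamw)) := by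
    rw [Finset.mul_sum]
    exact Finset.sum_congr rfl fun i _ => by rw [hTi i]; ring
  have swap : ∑ i, (∑ j, y j ^ 2 * B i j) * (∑ j, B i j) / (drow i + lamw)
      = ∑ j, y j ^ 2 * ∑ i, B i j * (drow i / (drow i + lamw)) := by
    have h3 : ∀ i, (∑ j, y j ^ 2 * B i j) * (∑ j, B i j) / (drow i + lamw)
        = ∑ j, y j ^ 2 * (B i j * (drow i / (drow i + lamw))) := fun i => by
      rw [hdrow i, mul_div_assoc, Finset.sum_mul]
      exact Finset.sum_congr rfl fun j _ => by ring
    rw [Finset.sum_congr rfl fun i _ => h3 i, Finset.sum_comm]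
    exact Finset.sum_congr rfl fun j _ => (Finset.mul_sum _ _ _).symm
  have key : ∑ j, x j ^ 2
      = (∑ i, (∑ j, y j ^ 2 * B i j) * (∑ j, B i j) / (drow i + lamw))
        + ∑ j, (x j ^ 2 / (dcol j + lamf)) *
            (lamf + lamw * ∑ i, B i j / (drow i + lamw)) := by
    rw [swap, ← Finset.sum_add_distrib]
    refine Finset.sum_congr rfl fun j _ => ?_
    rw [hyx j, hxy j]
    have hcomb : ∀ i, B i j * (drow i / (drow i + lamw)) + lamw * (B i j / (drow i + lamw))
        = B i j := fun i => by
      have hne := (hrowpos i).ne'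
      field_simp
    have h : dcol j = (∑ i, B i j * (drow i / (drow i + lamw)))
        + lamw * ∑ i, B i j / (drow i + lamw) := by
      rw [Finset.mul_sum, ← Finset.sum_add_distrib, hdcol j]
      exact Finset.sum_congr rfl fun i _ => (hcomb i).symm
    linear_combination (y j ^ 2) * h
  have hid : x ⬝ᵥ Lfl.mulVec x
      = (1 / 2) * ∑ i, (1 / (drow i + lamw)) *
          ∑ j, ∑ j', (x j / Real.sqrt (dcol j + lamf) -
            x j' / Real.sqrt (dcol j' + lamf)) ^ 2 * (B i j * B i j')
        + ∑ j, (x j ^ 2 / (dcol j + lamf)) *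
            (lamf + lamw * ∑ i, B i j / (drow i + lamw)) := by
    rw [hquad, h2, Finset.sum_sub_distrib, key]
    ring
  refine ⟨hid, ?_, ?_⟩
  · rw [hid]
    have hA : (0:ℝ) ≤ (1 / 2) * ∑ i, (1 / (drow i + lamw)) *
        ∑ j, ∑ j', (x j / Real.sqrt (dcol j + lamf) -
          x j' / Real.sqrt (dcol j' + lamf)) ^ 2 * (B i j * B i j') := by
      apply mul_nonneg (by norm_num)
      refine Finset.sum_nonneg fun i _ => mul_nonneg ?_ ?_
      · exact div_nonneg zero_le_one (hrowpos i).le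
      · refine Finset.sum_nonneg fun j _ => Finset.sum_nonneg fun j' _ =>
          mul_nonneg (sq_nonneg _) (mul_nonneg (hB i j) (hB i j'))
    have hBnd : lamf * ∑ j, x j ^ 2 / (dcol j + lamf)
        ≤ ∑ j, (x j ^ 2 / (dcol j + lamf)) *
            (lamf + lamw * ∑ i, B i j / (drow i + lamw)) := by
      rw [Finset.mul_sum]
      refine Finset.sum_le_sum fun j _ => ?_
      have h1 : 0 ≤ x j ^ 2 / (dcol j + lamf) := div_nonneg (sq_nonneg _) (hcolpos j).le
      have h2 : 0 ≤ lamw * ∑ i, B i j / (drow i + lamw) :=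
        mul_nonneg hlamw.le (Finset.sum_nonneg fun i _ =>
          div_nonneg (hB i j) (hrowpos i).le)
      nlinarith
    linarith
  · have hmd : ∀ j, dcol j ≤ maxd := fun j => by
      rw [hmaxd]; exact Finset.le_sup' dcol (Finset.mem_univ j)
    have hmdpos : 0 < maxd + lamf := lt_of_lt_of_le (hcolpos ⟨0, hp⟩) (by linarith [hmd ⟨0, hp⟩])
    have hrw : lamf * (∑ j, x j ^ 2) / (maxd + lamf)
        = ∑ j, lamf * (x j ^ 2 / (maxd + lamf)) := by
      rw [mul_div_assoc, Finset.sum_div, Finset.mul_sum]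
    rw [hrw, Finset.mul_sum]
    refine Finset.sum_le_sum fun j _ => ?_
    refine mul_le_mul_of_nonneg_left ?_ hlamf.le
    have := hmd j
    have := hcolpos j
    gcongr
end

section
/- In the degree-corrected stochastic block model setup with λ_f > 0 and λ_w ≥ 0, the smallest eigenvalue of 𝔏_{f,λ} = I_p − 𝔈_λ^⊤𝔈_λ satisfies eigmin(𝔏_{f,λ}) ≥ λ_f / (max_j θ_j C(·,ℓ_j) + λ_f) > 0, and consequently ‖𝔈_λ‖ ≤ √( max_j θ_j C(·,ℓ_j) / (max_j θ_j C(·,ℓ_j) + λ_f) ) < 1. -/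
open Matrix BigOperators

/-!
Write `𝔈 = D_w^{-1/2} 𝔅 D_f^{-1/2}`. For each worker `i`, Cauchy–Schwarz weighted by the
nonnegative row `𝔅 i ·` gives `(𝔈 x)_i² ≤ Σ_j 𝔅_ij y_j²` with `y = D_f^{-1/2} x`, because the row
sum of `𝔅` is `C(k_i,·)/n_{k_i}`, at most the worker degree `C(k_i,·)/n_{k_i} + λ_w`. Summing over
`i`, the column sums of `𝔅` are at most `d_j = θ_j C(·,ℓ_j)`, so
`‖𝔈 x‖² ≤ Σ_j d_j/(d_j + λ_f) x_j² ≤ ρ ‖x‖²` with `ρ = max_j d_j / (max_j d_j + λ_f) < 1`.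
Hence `‖𝔈‖ ≤ √ρ`, and the Rayleigh quotient of `I − 𝔈ᵀ𝔈` is at least
`1 − ρ = λ_f / (max_j d_j + λ_f)`.
-/

open Finset

namespace Matrix

variable {m n : Type*} [Fintype m] [Fintype n]

theorem sq_diagonal_inv_sqrt_mul_mulVec_le {B : Matrix m n ℝ} (hB : ∀ i j, 0 ≤ B i j)
    [DecidableEq m] {r : m → ℝ} (hr : ∀ i, ∑ j, B i j ≤ r i) (y : n → ℝ) (i : m) :
    ((diagonal (fun i => 1 / √(r i)) * B) *ᵥ y) i ^ 2 ≤ ∑ j, B i j * y j ^ 2 := by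
  have hS : 0 ≤ ∑ j, B i j * y j ^ 2 := sum_nonneg fun j _ => mul_nonneg (hB i j) (sq_nonneg _)
  have cauchySchwarz : (∑ j, B i j * y j) ^ 2 ≤ (∑ j, B i j) * ∑ j, B i j * y j ^ 2 :=
    sum_sq_le_sum_mul_sum_of_sq_le_mul _ (fun j _ => hB i j)
      (fun j _ => mul_nonneg (hB i j) (sq_nonneg _)) (fun j _ => le_of_eq (by ring))
  have hr0 : 0 ≤ r i := (sum_nonneg fun j _ => hB i j).trans (hr i)
  calc ((diagonal (fun i => 1 / √(r i)) * B) *ᵥ y) i ^ 2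
      = (∑ j, B i j * y j) ^ 2 / r i := by
        rw [← mulVec_mulVec, mulVec_diagonal, mul_pow, div_pow, Real.sq_sqrt hr0, mulVec,
          dotProduct]
        ring
    _ ≤ (∑ j, B i j) / r i * ∑ j, B i j * y j ^ 2 := by
        rw [div_mul_eq_mul_div]; gcongr
    _ ≤ ∑ j, B i j * y j ^ 2 :=
        mul_le_of_le_one_left hS (div_le_one_of_le₀ (hr i) hr0)

theorem sum_sq_diagonal_mul_mul_diagonal_mulVec_le {B : Matrix m n ℝ} (hB : ∀ i j, 0 ≤ B i j)
    [DecidableEq m] [DecidableEq n] {r : m → ℝ} (hr : ∀ i, ∑ j, B i j ≤ r i)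
    {c : n → ℝ} (hc : ∀ j, 0 ≤ c j) (x : n → ℝ) :
    ∑ i, ((diagonal (fun i => 1 / √(r i)) * B * diagonal (fun j => 1 / √(c j))) *ᵥ x) i ^ 2 ≤
      ∑ j, (∑ i, B i j) / c j * x j ^ 2 := by
  set y : n → ℝ := fun j => 1 / √(c j) * x j
  have hy : diagonal (fun j => 1 / √(c j)) *ᵥ x = y := funext fun j => mulVec_diagonal _ _ j
  calc ∑ i, ((diagonal (fun i => 1 / √(r i)) * B * diagonal (fun j => 1 / √(c j))) *ᵥ x) i ^ 2
      ≤ ∑ i, ∑ j, B i j * y j ^ 2 := by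
        rw [← mulVec_mulVec, hy]
        exact sum_le_sum fun i _ => sq_diagonal_inv_sqrt_mul_mulVec_le hB hr y i
    _ = ∑ j, (∑ i, B i j) / c j * x j ^ 2 := by
        rw [sum_comm]
        refine sum_congr rfl fun j _ => ?_
        rw [← sum_mul, mul_pow, div_pow, one_pow, Real.sq_sqrt (hc j)]
        ring

theorem one_sub_le_of_mulVec_eq_smul {E : Matrix m n ℝ} [DecidableEq n] {ρ : ℝ}
    (hE : ∀ x, ∑ i, (E *ᵥ x) i ^ 2 ≤ ρ * ∑ j, x j ^ 2) {μ : ℝ} {x : n → ℝ} (hx : x ≠ 0)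
    (hμ : (1 - Eᵀ * E) *ᵥ x = μ • x) : 1 - ρ ≤ μ := by
  have hxx : 0 < x ⬝ᵥ x := by simpa using dotProduct_star_self_pos_iff.2 hx
  have quadForm : x ⬝ᵥ (1 - Eᵀ * E) *ᵥ x = x ⬝ᵥ x - (E *ᵥ x) ⬝ᵥ (E *ᵥ x) := by
    rw [sub_mulVec, dotProduct_sub, one_mulVec, ← mulVec_mulVec, dotProduct_transpose_mulVec,
      dotProduct_comm]
  have hEx : (E *ᵥ x) ⬝ᵥ (E *ᵥ x) ≤ ρ * (x ⬝ᵥ x) := by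
    simpa only [dotProduct, sq] using hE x
  rw [hμ, dotProduct_smul, smul_eq_mul] at quadForm
  refine le_of_mul_le_mul_right ?_ hxx
  linarith

theorem toEuclideanLin_norm_le_sqrt {A : Matrix m n ℝ} [DecidableEq n] {ρ : ℝ} (hρ : 0 ≤ ρ)
    (hA : ∀ x, ∑ i, (A *ᵥ x) i ^ 2 ≤ ρ * ∑ j, x j ^ 2) :
    ‖LinearMap.toContinuousLinearMap (toEuclideanLin A)‖ ≤ √ρ := by
  refine ContinuousLinearMap.opNorm_le_bound _ (Real.sqrt_nonneg ρ) fun x => ?_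
  refine (sq_le_sq₀ (norm_nonneg _) (by positivity)).1 ?_
  rw [mul_pow, Real.sq_sqrt hρ, EuclideanSpace.real_norm_sq_eq, EuclideanSpace.real_norm_sq_eq]
  exact hA x.ofLp

end Matrix

section Fibers

variable {ι κ : Type*} [Fintype ι] [Fintype κ] [DecidableEq κ]

theorem sum_mul_comp_eq_sum_of_sum_fiber_eq_one (f : ι → κ) {θ : ι → ℝ}
    (hθ : ∀ a, ∑ j ∈ univ.filter (fun j => f j = a), θ j = 1) (g : κ → ℝ) :
    ∑ j, θ j * g (f j) = ∑ a, g a := by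
  rw [← sum_fiberwise univ f]
  refine sum_congr rfl fun a _ => ?_
  rw [sum_congr rfl fun j hj => by rw [(mem_filter.1 hj).2], ← sum_mul, hθ, one_mul]

theorem sum_comp_div_card_fiber_le (f : ι → κ) {N : κ → ℕ}
    (hN : ∀ a, N a = #(univ.filter (fun i => f i = a))) {g : κ → ℝ} (hg : ∀ a, 0 ≤ g a) :
    ∑ i, g (f i) / N (f i) ≤ ∑ a, g a := by
  rw [← sum_fiberwise univ f]
  refine sum_le_sum fun a _ => ?_
  rw [sum_congr rfl fun i hi => by rw [(mem_filter.1 hi).2], sum_const, ← hN, nsmul_eq_mul]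
  rcases (N a).eq_zero_or_pos with hNa | hNa
  · simpa [hNa] using hg a
  · rw [mul_div_cancel₀ _ (by positivity)]

end Fibers

theorem stmt_6_general (n p K : ℕ) (hp : 0 < p)
    (kw : Fin n → Fin K) (ll : Fin p → Fin K)
    (nsize : Fin K → ℕ)
    (hnsize : ∀ a, nsize a = (Finset.univ.filter (fun i => kw i = a)).card)
    (θ : Fin p → ℝ) (hθ : ∀ j, 0 < θ j)
    (hθsum : ∀ a, ∑ j ∈ Finset.univ.filter (fun j => ll j = a), θ j = 1)
    (C : Matrix (Fin K) (Fin K) ℝ) (hC : ∀ a b, 0 ≤ C a b)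
    (Crow : Fin K → ℝ) (hCrow : ∀ a, Crow a = ∑ b, C a b)
    (Ccol : Fin K → ℝ) (hCcol : ∀ b, Ccol b = ∑ a, C a b)
    (Bb : Matrix (Fin n) (Fin p) ℝ)
    (hBb : ∀ i j, Bb i j = θ j * C (kw i) (ll j) / (nsize (kw i) : ℝ))
    (lamw lamf : ℝ) (hlamw : 0 ≤ lamw) (hlamf : 0 < lamf)
    (Ee : Matrix (Fin n) (Fin p) ℝ)
    (hEe : Ee = Matrix.diagonal
        (fun i => 1 / Real.sqrt (Crow (kw i) / (nsize (kw i) : ℝ) + lamw)) * Bb *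
      Matrix.diagonal (fun j => 1 / Real.sqrt (θ j * Ccol (ll j) + lamf)))
    (Lfl : Matrix (Fin p) (Fin p) ℝ) (hLfl : Lfl = 1 - Eeᵀ * Ee)
    (maxd : ℝ)
    (hmaxd : maxd = Finset.univ.sup' ⟨⟨0, hp⟩, Finset.mem_univ _⟩
      (fun j => θ j * Ccol (ll j))) :
    (∀ (μ : ℝ) (x : Fin p → ℝ), x ≠ 0 → Lfl.mulVec x = μ • x →
      lamf / (maxd + lamf) ≤ μ) ∧
    0 < lamf / (maxd + lamf) ∧
    specNorm Ee ≤ Real.sqrt (maxd / (maxd + lamf)) ∧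
    Real.sqrt (maxd / (maxd + lamf)) < 1 := by
  have hB : ∀ i j, 0 ≤ Bb i j := fun i j => by
    rw [hBb]; have := hθ j; have := hC (kw i) (ll j); positivity
  have hd : ∀ j, 0 ≤ θ j * Ccol (ll j) := fun j => by
    rw [hCcol]; exact mul_nonneg (hθ j).le (sum_nonneg fun a _ => hC a _)
  have hdle : ∀ j, θ j * Ccol (ll j) ≤ maxd := fun j =>
    hmaxd ▸ le_sup' (fun j => θ j * Ccol (ll j)) (mem_univ j)
  have hmaxd0 : 0 ≤ maxd := (hd _).trans (hdle ⟨0, hp⟩)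
  have rowSum : ∀ i, ∑ j, Bb i j ≤ Crow (kw i) / nsize (kw i) + lamw := fun i => by
    simp_rw [hBb, ← sum_div, sum_mul_comp_eq_sum_of_sum_fiber_eq_one ll hθsum, hCrow]
    exact le_add_of_nonneg_right hlamw
  have colSum : ∀ j, ∑ i, Bb i j ≤ θ j * Ccol (ll j) := fun j => by
    simp_rw [hBb, mul_div_assoc, ← mul_sum, hCcol]
    exact mul_le_mul_of_nonneg_left (sum_comp_div_card_fiber_le kw hnsize fun a => hC a (ll j))
      (hθ j).le
  set ρ := maxd / (maxd + lamf)
  have quadBound : ∀ x, ∑ i, (Ee *ᵥ x) i ^ 2 ≤ ρ * ∑ j, x j ^ 2 := fun x => by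
    rw [hEe, mul_sum]
    refine (sum_sq_diagonal_mul_mul_diagonal_mulVec_le hB rowSum
      (fun j => by linarith [hd j]) x).trans (sum_le_sum fun j _ => ?_)
    gcongr
    calc (∑ i, Bb i j) / (θ j * Ccol (ll j) + lamf)
        ≤ θ j * Ccol (ll j) / (θ j * Ccol (ll j) + lamf) :=
          div_le_div_of_nonneg_right (colSum j) (by linarith [hd j])
      _ ≤ ρ := by
        rw [div_le_div_iff₀ (by linarith [hd j]) (by linarith)]
        nlinarith [hdle j]
  have hρ : ρ < 1 := (div_lt_one (by linarith)).2 (by linarith)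
  have hlamf_eq : lamf / (maxd + lamf) = 1 - ρ := by
    rw [eq_sub_iff_add_eq, ← add_div, add_comm, div_self (by linarith)]
  refine ⟨fun μ x hx hμ => ?_, div_pos hlamf (by linarith), ?_, ?_⟩
  · rw [hlamf_eq]
    exact one_sub_le_of_mulVec_eq_smul quadBound hx (hLfl ▸ hμ)
  · exact toEuclideanLin_norm_le_sqrt (by positivity) quadBound
  · exact (Real.sqrt_lt' one_pos).2 (by simpa using hρ)

/-- in the DCSBM with `λ_f > 0` and `λ_w ≥ 0`, the smallest eigenvalue
of `𝔏_{f,λ} = I − 𝔈_λ^⊤𝔈_λ` is at least `λ_f/(max_j θ_j C(·,ℓ_j) + λ_f) > 0`, and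
`‖𝔈_λ‖ ≤ √(max_j θ_j C(·,ℓ_j)/(max_j θ_j C(·,ℓ_j) + λ_f)) < 1`. -/
theorem stmt_6 (n p K : ℕ) (hn : 0 < n) (hp : 0 < p) (hK : 0 < K)
    (kw : Fin n → Fin K) (ll : Fin p → Fin K)
    (nsize : Fin K → ℕ)
    (hnsize : ∀ a, nsize a = (Finset.univ.filter (fun i => kw i = a)).card)
    (hnpos : ∀ a, 0 < nsize a)
    (θ : Fin p → ℝ) (hθ : ∀ j, 0 < θ j)
    (hθsum : ∀ a, ∑ j ∈ Finset.univ.filter (fun j => ll j = a), θ j = 1)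
    (C : Matrix (Fin K) (Fin K) ℝ) (hC : ∀ a b, 0 ≤ C a b)
    (Crow : Fin K → ℝ) (hCrow : ∀ a, Crow a = ∑ b, C a b)
    (Ccol : Fin K → ℝ) (hCcol : ∀ b, Ccol b = ∑ a, C a b)
    (Bb : Matrix (Fin n) (Fin p) ℝ)
    (hBb : ∀ i j, Bb i j = θ j * C (kw i) (ll j) / (nsize (kw i) : ℝ))
    (lamw lamf : ℝ) (hlamw : 0 ≤ lamw) (hlamf : 0 < lamf)
    (hwpos : ∀ i, 0 < Crow (kw i) / (nsize (kw i) : ℝ) + lamw)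
    (Ee : Matrix (Fin n) (Fin p) ℝ)
    (hEe : Ee = Matrix.diagonal
        (fun i => 1 / Real.sqrt (Crow (kw i) / (nsize (kw i) : ℝ) + lamw)) * Bb *
      Matrix.diagonal (fun j => 1 / Real.sqrt (θ j * Ccol (ll j) + lamf)))
    (Lfl : Matrix (Fin p) (Fin p) ℝ) (hLfl : Lfl = 1 - Eeᵀ * Ee)
    (maxd : ℝ)
    (hmaxd : maxd = Finset.univ.sup' ⟨⟨0, hp⟩, Finset.mem_univ _⟩
      (fun j => θ j * Ccol (ll j))) :
    (∀ (μ : ℝ) (x : Fin p → ℝ), x ≠ 0 → Lfl.mulVec x = μ • x →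
      lamf / (maxd + lamf) ≤ μ) ∧
    0 < lamf / (maxd + lamf) ∧
    specNorm Ee ≤ Real.sqrt (maxd / (maxd + lamf)) ∧
    Real.sqrt (maxd / (maxd + lamf)) < 1 :=
  stmt_6_general n p K hp kw ll nsize hnsize θ hθ hθsum C hC Crow hCrow Ccol hCcol Bb hBb lamw lamf
    hlamw hlamf Ee hEe Lfl hLfl maxd hmaxd
end

section
/- (Concentration of regularized firm degrees.) In the degree-corrected stochastic block model, if M = max(M_w, M_f) ≤ 1 / (3 ln((n+p)/ε)) and t = √(3 M ln((n+p)/ε)) ≤ 1, then for every firm j, Pr{ | d_{·j} − θ_j C(·,ℓ_j) | / ( θ_j C(·,ℓ_j) + λ_f ) ≥ t } ≤ 2ε/(n+p); consequently Pr{ ‖I_p − D_{f,λ}^{1/2} 𝔇_{f,λ}^{-1/2}‖ ≥ 1 − √(1−t) } ≤ 2pε/(n+p) and Pr{ ‖D_{f,λ}^{1/2} 𝔇_{f,λ}^{-1/2}‖ ≥ √(1+t) } ≤ pε/(n+p). -/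
open Matrix MeasureTheory ProbabilityTheory BigOperators

/-- Euclidean norm of a vector in `ℝ^n`. -/
noncomputable def vecNorm {n : ℕ} (x : Fin n → ℝ) : ℝ :=
  Real.sqrt (∑ i, x i ^ 2)

/-! For a fixed firm `j` the degree `d_{·j}` is a sum of independent Bernoulli variables whose
means add up to `μ = θ_j C(·,ℓ_j)`. Chernoff's bound with parameter `2t/3`, together with
`eˢ - 1 - s ≤ s²/2 + (2/9)|s|³` for `|s| ≤ 1`, bounds each tail `|d_{·j} - μ| ≥ t (μ + λ_f)` by
`exp (-(92/243) t² (μ + λ_f))`, and `M (μ + λ_f) ≥ 1` turns this into `exp (-L) = ε/(n+p)` with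
`L = ln ((n+p)/ε)`.

The matrix `D_{f,λ}^{1/2} 𝔇_{f,λ}^{-1/2}` is diagonal with entries `√((d_{·j}+λ_f)/(μ_j+λ_f))`,
and the spectral norm of a diagonal matrix is the largest modulus of its entries. Since
`√(1+t) - 1 ≤ 1 - √(1-t)`, both norm events force a deviation of some firm degree, and a union
bound over the `p` firms finishes the proof. -/

open Real Finset

lemma Real.exp_sub_one_sub_le {x : ℝ} (hx : |x| ≤ 1) :
    exp x - 1 - x ≤ x ^ 2 / 2 + 2 / 9 * |x| ^ 3 := by
  have h := abs_sub_le_iff.mp (Real.exp_bound hx (n := 3) (by norm_num))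
  norm_num [Finset.sum_range_succ, Nat.factorial] at h
  nlinarith [pow_nonneg (abs_nonneg x) 3]

lemma bernstein_exponent_le {μ b t s L : ℝ} (hμ : 0 ≤ μ) (hμb : μ ≤ b) (ht0 : 0 ≤ t)
    (ht1 : t ≤ 1) (hs : |s| = 2 * t / 3) (hL : 3 * L ≤ t ^ 2 * b) :
    μ * (exp s - 1 - s) - 2 * t / 3 * (t * b) ≤ -L := by
  have hexp := Real.exp_sub_one_sub_le (x := s) (by linarith)
  rw [hs, ← sq_abs, hs] at hexp
  have hpoly : 0 ≤ (2 * t / 3) ^ 2 / 2 + 2 / 9 * (2 * t / 3) ^ 3 := by positivity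
  have hb : μ * (exp s - 1 - s) ≤ b * ((2 * t / 3) ^ 2 / 2 + 2 / 9 * (2 * t / 3) ^ 3) :=
    (mul_le_mul_of_nonneg_left hexp hμ).trans (mul_le_mul_of_nonneg_right hμb hpoly)
  have hb0 : 0 ≤ b := hμ.trans hμb
  nlinarith [mul_le_mul_of_nonneg_left (pow_le_pow_of_le_one ht0 ht1 (by norm_num : 2 ≤ 3)) hb0,
    mul_nonneg hb0 (sq_nonneg t)]

lemma bernstein_threshold_bounds {M L t : ℝ} (hM : 0 < M) (hML : M ≤ 1 / (3 * L))
    (ht : t = √(3 * M * L)) :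
    0 < t ∧ t ≤ 1 ∧ ∀ b, 1 ≤ M * b → 3 * L ≤ t ^ 2 * b := by
  have hL : 0 < L := by have := one_div_pos.mp (hM.trans_le hML); linarith
  have ht2 : t ^ 2 = 3 * M * L := by rw [ht, sq_sqrt (by positivity)]
  refine ⟨ht ▸ sqrt_pos.mpr (by positivity), ?_, fun b hb => ?_⟩
  · rw [ht, sqrt_le_one]
    linarith [(le_div_iff₀ (by positivity)).mp hML]
  · rw [ht2]; nlinarith

lemma abs_one_sub_sqrt_lt {x t : ℝ} (ht : t ≤ 1) (hx : |x - 1| < t) :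
    |1 - √x| < 1 - √(1 - t) := by
  obtain ⟨hlo, hhi⟩ := abs_lt.mp hx
  have hsqrt_lo : √(1 - t) < √x := sqrt_lt_sqrt (by linarith) (by linarith)
  have hsqrt_hi : √x < √(1 + t) := sqrt_lt_sqrt (by linarith) (by linarith)
  have hsum : √(1 + t) + √(1 - t) ≤ 2 := by
    have h1 := sq_sqrt (by linarith : (0 : ℝ) ≤ 1 + t)
    have h2 := sq_sqrt (by linarith : (0 : ℝ) ≤ 1 - t)
    nlinarith [sq_nonneg (√(1 + t) - √(1 - t)), sqrt_nonneg (1 + t), sqrt_nonneg (1 - t)]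
  rw [abs_lt]
  constructor <;> linarith

lemma Finset.sum_div_card_fiber {ι κ : Type*} [Fintype ι] [Fintype κ] [DecidableEq κ]
    {g : ι → κ} (hg : Function.Surjective g) (f : κ → ℝ) :
    ∑ i, f (g i) / #{i' | g i' = g i} = ∑ a, f a := by
  rw [← Finset.sum_fiberwise Finset.univ g]
  refine Finset.sum_congr rfl fun a _ => ?_
  have hne : (#{i' | g i' = a} : ℝ) ≠ 0 := by
    obtain ⟨i, rfl⟩ := hg a
    exact Nat.cast_ne_zero.mpr (Finset.card_ne_zero.mpr ⟨i, by simp⟩)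
  rw [Finset.sum_congr rfl fun i hi => by rw [(Finset.mem_filter.mp hi).2], Finset.sum_const,
    nsmul_eq_mul]
  field_simp

lemma Finset.one_le_one_div_inf'_add_mul {ι : Type*} {s : Finset ι} (hs : s.Nonempty)
    {f : ι → ℝ} {a : ℝ} (ha : 0 < s.inf' hs f + a) {i : ι} (hi : i ∈ s) :
    1 ≤ 1 / (s.inf' hs f + a) * (f i + a) := by
  rw [one_div_mul_eq_div, one_le_div ha]
  linarith [s.inf'_le f hi]

lemma measure_le_ofReal_card_mul_of_subset_iUnion {Ω ι : Type*} [MeasurableSpace Ω]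
    [Fintype ι] {P : Measure Ω} {s : Set Ω} {u : ι → Set Ω} (hs : s ⊆ ⋃ i, u i) {δ : ℝ}
    (h : ∀ i, P (u i) ≤ ENNReal.ofReal δ) : P s ≤ ENNReal.ofReal (Fintype.card ι * δ) := by
  rw [ENNReal.ofReal_mul (Nat.cast_nonneg _), ENNReal.ofReal_natCast, ← nsmul_eq_mul,
    ← Finset.card_univ, ← Finset.sum_const]
  exact (measure_mono hs).trans <|
    (measure_iUnion_fintype_le P u).trans (Finset.sum_le_sum fun i _ => h i)

namespace ProbabilityTheory

variable {Ω ι : Type*} [MeasurableSpace Ω] {P : Measure Ω}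

structure IsBernoulli (X : Ω → ℝ) (q : ℝ) (P : Measure Ω) : Prop where
  eq_zero_or_eq_one : ∀ ω, X ω = 0 ∨ X ω = 1
  measurable : Measurable X
  nonneg : 0 ≤ q
  measure_eq_one : P {ω | X ω = 1} = ENNReal.ofReal q

namespace IsBernoulli

variable {X : Ω → ℝ} {q : ℝ}

lemma exp_mul_eq (hX : IsBernoulli X q P) (c : ℝ) :
    (fun ω => exp (c * X ω)) = fun ω => 1 + (exp c - 1) * {ω | X ω = 1}.indicator 1 ω := by
  ext ω
  rcases hX.eq_zero_or_eq_one ω with h | h <;> simp [h, Set.indicator]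

lemma integrable_exp_mul [IsFiniteMeasure P] (hX : IsBernoulli X q P) (c : ℝ) :
    Integrable (fun ω => exp (c * X ω)) P := by
  rw [hX.exp_mul_eq c]
  exact (integrable_const 1).add
    (((integrable_const 1).indicator (hX.measurable (measurableSet_singleton 1))).const_mul _)

lemma mgf_eq [IsProbabilityMeasure P] (hX : IsBernoulli X q P) (c : ℝ) :
    mgf X P c = 1 + q * (exp c - 1) := by
  have hA : MeasurableSet {ω | X ω = 1} := hX.measurable (measurableSet_singleton 1)
  rw [mgf, hX.exp_mul_eq c, integral_add (integrable_const 1)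
    (((integrable_const 1).indicator hA).const_mul _), integral_const_mul,
    integral_indicator_one hA, measureReal_def, hX.measure_eq_one,
    ENNReal.toReal_ofReal hX.nonneg]
  simp [mul_comm]

end IsBernoulli

variable [IsProbabilityMeasure P] [Fintype ι] {X : ι → Ω → ℝ} {q : ι → ℝ} {b t L : ℝ}

lemma mgf_sum_le_of_isBernoulli (hX : ∀ i, IsBernoulli (X i) (q i) P)
    (hind : iIndepFun X P) (c : ℝ) :
    mgf (∑ i, X i) P c ≤ exp ((∑ i, q i) * (exp c - 1)) := by
  rw [hind.mgf_sum (fun i => (hX i).measurable), Finset.sum_mul, exp_sum]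
  refine Finset.prod_le_prod (fun i _ => mgf_nonneg) fun i _ => ?_
  rw [(hX i).mgf_eq c, add_comm]
  exact add_one_le_exp _

lemma integrable_exp_mul_sum_of_isBernoulli (hX : ∀ i, IsBernoulli (X i) (q i) P)
    (hind : iIndepFun X P) (c : ℝ) : Integrable (fun ω => exp (c * (∑ i, X i) ω)) P :=
  hind.integrable_exp_mul_sum (fun i => (hX i).measurable) fun i _ => (hX i).integrable_exp_mul c

lemma measure_sum_ge_le_of_isBernoulli (hX : ∀ i, IsBernoulli (X i) (q i) P)
    (hind : iIndepFun X P) (hb : ∑ i, q i ≤ b) (ht0 : 0 ≤ t) (ht1 : t ≤ 1)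
    (hL : 3 * L ≤ t ^ 2 * b) :
    P {ω | ∑ i, q i + t * b ≤ ∑ i, X i ω} ≤ ENNReal.ofReal (exp (-L)) := by
  set μ := ∑ i, q i
  have hμ : 0 ≤ μ := Finset.sum_nonneg fun i _ => (hX i).nonneg
  set c := 2 * t / 3
  rw [← ofReal_measureReal]
  refine ENNReal.ofReal_le_ofReal ?_
  calc P.real {ω | μ + t * b ≤ ∑ i, X i ω}
      = P.real {ω | μ + t * b ≤ (∑ i, X i) ω} := by simp only [Finset.sum_apply]
    _ ≤ exp (-c * (μ + t * b)) * mgf (∑ i, X i) P c :=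
        measure_ge_le_exp_mul_mgf _ (by positivity)
          (integrable_exp_mul_sum_of_isBernoulli hX hind c)
    _ ≤ exp (-c * (μ + t * b)) * exp (μ * (exp c - 1)) := by
        gcongr; exact mgf_sum_le_of_isBernoulli hX hind c
    _ = exp (μ * (exp c - 1 - c) - c * (t * b)) := by rw [← exp_add]; ring_nf
    _ ≤ exp (-L) := exp_le_exp.mpr <|
        bernstein_exponent_le hμ hb ht0 ht1 (abs_of_nonneg (by positivity)) hL

lemma measure_sum_le_le_of_isBernoulli (hX : ∀ i, IsBernoulli (X i) (q i) P)
    (hind : iIndepFun X P) (hb : ∑ i, q i ≤ b) (ht0 : 0 ≤ t) (ht1 : t ≤ 1)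
    (hL : 3 * L ≤ t ^ 2 * b) :
    P {ω | ∑ i, X i ω ≤ ∑ i, q i - t * b} ≤ ENNReal.ofReal (exp (-L)) := by
  set μ := ∑ i, q i
  have hμ : 0 ≤ μ := Finset.sum_nonneg fun i _ => (hX i).nonneg
  set c := 2 * t / 3
  rw [← ofReal_measureReal]
  refine ENNReal.ofReal_le_ofReal ?_
  calc P.real {ω | ∑ i, X i ω ≤ μ - t * b}
      = P.real {ω | (∑ i, X i) ω ≤ μ - t * b} := by simp only [Finset.sum_apply]
    _ ≤ exp (- -c * (μ - t * b)) * mgf (∑ i, X i) P (-c) :=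
        measure_le_le_exp_mul_mgf _ (by simp only [c]; linarith)
          (integrable_exp_mul_sum_of_isBernoulli hX hind (-c))
    _ ≤ exp (- -c * (μ - t * b)) * exp (μ * (exp (-c) - 1)) := by
        gcongr; exact mgf_sum_le_of_isBernoulli hX hind (-c)
    _ = exp (μ * (exp (-c) - 1 - -c) - c * (t * b)) := by rw [← exp_add]; ring_nf
    _ ≤ exp (-L) := exp_le_exp.mpr <| bernstein_exponent_le hμ hb ht0 ht1
        (by rw [abs_neg, abs_of_nonneg (by positivity)]) hL

lemma measure_abs_sum_sub_ge_le_of_isBernoulli (hX : ∀ i, IsBernoulli (X i) (q i) P)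
    (hind : iIndepFun X P) (hb : ∑ i, q i ≤ b) (ht0 : 0 ≤ t) (ht1 : t ≤ 1)
    (hL : 3 * L ≤ t ^ 2 * b) :
    P {ω | t * b ≤ |∑ i, X i ω - ∑ i, q i|} ≤ ENNReal.ofReal (2 * exp (-L)) := by
  calc P {ω | t * b ≤ |∑ i, X i ω - ∑ i, q i|}
      ≤ P ({ω | ∑ i, X i ω ≤ ∑ i, q i - t * b} ∪ {ω | ∑ i, q i + t * b ≤ ∑ i, X i ω}) := by
        refine measure_mono fun ω hω => ?_
        rcases le_abs'.mp (Set.mem_ofPred_eq ▸ hω) with h | h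
        exacts [Or.inl (by simp only [Set.mem_ofPred_eq]; linarith),
          Or.inr (by simp only [Set.mem_ofPred_eq]; linarith)]
    _ ≤ ENNReal.ofReal (exp (-L)) + ENNReal.ofReal (exp (-L)) :=
        (measure_union_le _ _).trans <| add_le_add
          (measure_sum_le_le_of_isBernoulli hX hind hb ht0 ht1 hL)
          (measure_sum_ge_le_of_isBernoulli hX hind hb ht0 ht1 hL)
    _ = ENNReal.ofReal (2 * exp (-L)) := by
        rw [← ENNReal.ofReal_add (exp_pos _).le (exp_pos _).le, two_mul]

end ProbabilityTheory

lemma specNorm_diagonal {m : ℕ} (v : Fin m → ℝ) : specNorm (diagonal v) = ‖v‖ := by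
  open scoped Matrix.Norms.L2Operator in exact l2_opNorm_diagonal v

lemma exists_le_abs_of_le_specNorm_diagonal {m : ℕ} {v : Fin m → ℝ} {r : ℝ} (hr : 0 < r)
    (h : r ≤ specNorm (diagonal v)) : ∃ j, r ≤ |v j| := by
  by_contra! hlt
  exact (specNorm_diagonal v ▸ h).not_gt ((pi_norm_lt_iff hr).mpr hlt)

lemma diagonal_sqrt_mul_diagonal_one_div_sqrt {m : ℕ} (x y : Fin m → ℝ) (hy : ∀ j, 0 ≤ y j) :
    ((diagonal fun j => √(x j)) * diagonal fun j => 1 / √(y j)) =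
      diagonal fun j => √(x j / y j) := by
  simp only [diagonal_mul_diagonal, mul_one_div, sqrt_div' _ (hy _)]

section RegularizedRatio

variable {m : ℕ} {D μ : Fin m → ℝ} {a t : ℝ}

lemma exists_le_abs_div_of_le_specNorm_one_sub (hb : ∀ j, 0 < μ j + a) (ht0 : 0 < t)
    (ht1 : t ≤ 1)
    (h : 1 - √(1 - t) ≤ specNorm (1 - (diagonal fun j => √(D j + a)) *
      diagonal fun j => 1 / √(μ j + a))) :
    ∃ j, t ≤ |D j - μ j| / (μ j + a) := by
  have hr : 0 < 1 - √(1 - t) := by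
    rw [sub_pos, sqrt_lt' one_pos]; linarith
  rw [diagonal_sqrt_mul_diagonal_one_div_sqrt _ _ fun j => (hb j).le, ← diagonal_one,
    diagonal_sub] at h
  obtain ⟨j, hj⟩ := exists_le_abs_of_le_specNorm_diagonal hr h
  refine ⟨j, not_lt.mp fun hlt => (abs_one_sub_sqrt_lt ht1 ?_).not_ge hj⟩
  rwa [div_sub_one (hb j).ne', abs_div, abs_of_pos (hb j), add_sub_add_right_eq_sub]

lemma exists_add_mul_le_of_sqrt_le_specNorm (hb : ∀ j, 0 < μ j + a) (ht : 0 ≤ t)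
    (h : √(1 + t) ≤ specNorm ((diagonal fun j => √(D j + a)) *
      diagonal fun j => 1 / √(μ j + a))) :
    ∃ j, μ j + t * (μ j + a) ≤ D j := by
  rw [diagonal_sqrt_mul_diagonal_one_div_sqrt _ _ fun j => (hb j).le] at h
  obtain ⟨j, hj⟩ := exists_le_abs_of_le_specNorm_diagonal (by positivity) h
  rw [abs_of_nonneg (sqrt_nonneg _), sqrt_le_sqrt_iff' (by linarith), le_div_iff₀ (hb j)] at hj
  exact ⟨j, by linarith⟩

end RegularizedRatio

lemma sum_div_card_fiber_eq_col_sum {n p K : ℕ} {kw : Fin n → Fin K} {ll : Fin p → Fin K}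
    {nsize : Fin K → ℕ} (hnsize : ∀ a, nsize a = (Finset.univ.filter (fun i => kw i = a)).card)
    (hnpos : ∀ a, 0 < nsize a) (θ : Fin p → ℝ) (C : Matrix (Fin K) (Fin K) ℝ) (j : Fin p) :
    ∑ i, θ j * C (kw i) (ll j) / (nsize (kw i) : ℝ) = θ j * ∑ a, C a (ll j) := by
  have hkw : Function.Surjective kw := fun a => by
    obtain ⟨i, hi⟩ := Finset.card_pos.mp (hnsize a ▸ hnpos a)
    exact ⟨i, (Finset.mem_filter.mp hi).2⟩
  simp_rw [hnsize, Finset.mul_sum]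
  exact Finset.sum_div_card_fiber hkw fun a => θ j * C a (ll j)

theorem stmt_11_general
    (n p K : ℕ) (hp : 0 < p)
    (kw : Fin n → Fin K) (ll : Fin p → Fin K)
    (nsize : Fin K → ℕ)
    (hnsize : ∀ a, nsize a = (Finset.univ.filter (fun i => kw i = a)).card)
    (hnpos : ∀ a, 0 < nsize a)
    (θ : Fin p → ℝ) (hθ : ∀ j, 0 < θ j)
    (C : Matrix (Fin K) (Fin K) ℝ) (hC : ∀ a b, 0 ≤ C a b)
    (Ccol : Fin K → ℝ) (hCcol : ∀ b, Ccol b = ∑ a, C a b)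
    (pq : Fin n → Fin p → ℝ)
    (hpq : ∀ i j, pq i j = θ j * C (kw i) (ll j) / (nsize (kw i) : ℝ))
    {Ω : Type} [MeasurableSpace Ω] (P : Measure Ω) [IsProbabilityMeasure P]
    (d : Fin n → Fin p → Ω → ℝ)
    (hd01 : ∀ i j ω, d i j ω = 0 ∨ d i j ω = 1)
    (hdmeas : ∀ i j, Measurable (d i j))
    (hdber : ∀ i j, P {ω | d i j ω = 1} = ENNReal.ofReal (pq i j))
    (hindep : iIndepFun
      (fun (q : Fin n × Fin p) ω => d q.1 q.2 ω) P)
    (lamf : ℝ) (hlamf : 0 < lamf)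
    (dcol : Ω → Fin p → ℝ) (hdcold : ∀ ω j, dcol ω j = ∑ i, d i j ω)
    (dlf Mw Mf : ℝ)
    (hdlf : dlf = Finset.univ.inf' ⟨⟨0, hp⟩, Finset.mem_univ _⟩
      (fun j => θ j * Ccol (ll j)))
    (hMf : Mf = 1 / (dlf + lamf))
    (ε : ℝ) (hε : 0 < ε)
    (hM : max Mw Mf ≤ 1 / (3 * Real.log ((n + p : ℝ) / ε)))
    (t : ℝ) (ht : t = Real.sqrt (3 * max Mw Mf * Real.log ((n + p : ℝ) / ε)))
    (Dhalf : Ω → Matrix (Fin p) (Fin p) ℝ)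
    (hDhalf : ∀ ω, Dhalf ω =
      Matrix.diagonal (fun j => Real.sqrt (dcol ω j + lamf)) *
        Matrix.diagonal (fun j => 1 / Real.sqrt (θ j * Ccol (ll j) + lamf))) :
    (∀ j, P {ω | t ≤ |dcol ω j - θ j * Ccol (ll j)| / (θ j * Ccol (ll j) + lamf)} ≤
      ENNReal.ofReal (2 * ε / (n + p))) ∧
    P {ω | 1 - Real.sqrt (1 - t) ≤ specNorm (1 - Dhalf ω)} ≤
      ENNReal.ofReal (2 * p * ε / (n + p)) ∧
    P {ω | Real.sqrt (1 + t) ≤ specNorm (Dhalf ω)} ≤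
      ENNReal.ofReal (p * ε / (n + p)) := by
  have hμ : ∀ j, 0 ≤ θ j * Ccol (ll j) := fun j =>
    mul_nonneg (hθ j).le (hCcol _ ▸ Finset.sum_nonneg fun a _ => hC a _)
  have hb : ∀ j, 0 < θ j * Ccol (ll j) + lamf := fun j => by linarith [hμ j]
  have hdlf_pos : 0 < dlf + lamf := by linarith [hdlf ▸ Finset.le_inf' _ _ fun j _ => hμ j]
  have hMb : ∀ j, 1 ≤ max Mw Mf * (θ j * Ccol (ll j) + lamf) := fun j => by
    refine le_trans ?_ (mul_le_mul_of_nonneg_right (le_max_right _ _) (hb j).le)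
    rw [hMf, hdlf]
    exact Finset.one_le_one_div_inf'_add_mul _ (hdlf ▸ hdlf_pos) (Finset.mem_univ j)
  obtain ⟨ht0, ht1, htb⟩ := bernstein_threshold_bounds
    ((one_div_pos.mpr hdlf_pos).trans_le (hMf ▸ le_max_right Mw Mf)) hM ht
  have hexpL : exp (-Real.log ((n + p : ℝ) / ε)) = ε / (n + p) := by
    rw [Real.exp_neg, exp_log (by positivity), inv_div]
  have hX : ∀ j i, IsBernoulli (d i j) (pq i j) P := fun j i =>
    ⟨hd01 i j, hdmeas i j,
      hpq i j ▸ div_nonneg (mul_nonneg (hθ j).le (hC _ _)) (Nat.cast_nonneg _), hdber i j⟩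
  have hind : ∀ j, iIndepFun (fun i => d i j) P := fun j =>
    hindep.precomp (Prod.mk_left_injective j)
  have hsum : ∀ j, ∑ i, pq i j = θ j * Ccol (ll j) := fun j => by
    simp_rw [hpq, hCcol, sum_div_card_fiber_eq_col_sum hnsize hnpos]
  have hqb : ∀ j, ∑ i, pq i j ≤ θ j * Ccol (ll j) + lamf := fun j => by linarith [hsum j]
  have hdev : ∀ j, P {ω | t ≤ |dcol ω j - θ j * Ccol (ll j)| / (θ j * Ccol (ll j) + lamf)} ≤
      ENNReal.ofReal (2 * ε / (n + p)) := fun j => by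
    simpa only [le_div_iff₀ (hb j), hdcold, hsum, hexpL, mul_div_assoc] using
      measure_abs_sum_sub_ge_le_of_isBernoulli (hX j) (hind j) (hqb j) ht0.le ht1 (htb _ (hMb j))
  have hup : ∀ j, P {ω | θ j * Ccol (ll j) + t * (θ j * Ccol (ll j) + lamf) ≤ dcol ω j} ≤
      ENNReal.ofReal (ε / (n + p)) := fun j => by
    simpa only [hdcold, hsum, hexpL] using
      measure_sum_ge_le_of_isBernoulli (hX j) (hind j) (hqb j) ht0.le ht1 (htb _ (hMb j))
  refine ⟨hdev, ?_, ?_⟩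
  · refine (measure_le_ofReal_card_mul_of_subset_iUnion (fun ω hω => Set.mem_iUnion.mpr <|
      exists_le_abs_div_of_le_specNorm_one_sub hb ht0 ht1 (hDhalf ω ▸ hω)) hdev).trans_eq ?_
    rw [Fintype.card_fin]; ring_nf
  · refine (measure_le_ofReal_card_mul_of_subset_iUnion (fun ω hω => Set.mem_iUnion.mpr <|
      exists_add_mul_le_of_sqrt_le_specNorm hb ht0.le (hDhalf ω ▸ hω)) hup).trans_eq ?_
    rw [Fintype.card_fin, mul_div_assoc]

/-- Concentration of regularized firm degrees: under the Bernstein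
condition, for every firm `j`,
`Pr{ |d_{·j} − θ_j C(·,ℓ_j)|/(θ_j C(·,ℓ_j)+λ_f) ≥ t } ≤ 2ε/(n+p)`; consequently
`Pr{ ‖I_p − D_{f,λ}^{1/2}𝔇_{f,λ}^{-1/2}‖ ≥ 1 − √(1−t) } ≤ 2pε/(n+p)` and
`Pr{ ‖D_{f,λ}^{1/2}𝔇_{f,λ}^{-1/2}‖ ≥ √(1+t) } ≤ pε/(n+p)`. -/
theorem stmt_11
    (n p K : ℕ) (hn : 0 < n) (hp : 0 < p) (hK : 0 < K)
    (kw : Fin n → Fin K) (ll : Fin p → Fin K)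
    (nsize : Fin K → ℕ)
    (hnsize : ∀ a, nsize a = (Finset.univ.filter (fun i => kw i = a)).card)
    (hnpos : ∀ a, 0 < nsize a)
    (θ : Fin p → ℝ) (hθ : ∀ j, 0 < θ j)
    (hθsum : ∀ a, ∑ j ∈ Finset.univ.filter (fun j => ll j = a), θ j = 1)
    (C : Matrix (Fin K) (Fin K) ℝ) (hC : ∀ a b, 0 ≤ C a b)
    (Crow : Fin K → ℝ) (hCrow : ∀ a, Crow a = ∑ b, C a b)
    (Ccol : Fin K → ℝ) (hCcol : ∀ b, Ccol b = ∑ a, C a b)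
    (pq : Fin n → Fin p → ℝ)
    (hpq : ∀ i j, pq i j = θ j * C (kw i) (ll j) / (nsize (kw i) : ℝ))
    (hpq1 : ∀ i j, pq i j ≤ 1)
    {Ω : Type} [MeasurableSpace Ω] (P : Measure Ω) [IsProbabilityMeasure P]
    (d : Fin n → Fin p → Ω → ℝ)
    (hd01 : ∀ i j ω, d i j ω = 0 ∨ d i j ω = 1)
    (hdmeas : ∀ i j, Measurable (d i j))
    (hdber : ∀ i j, P {ω | d i j ω = 1} = ENNReal.ofReal (pq i j))
    (hindep : iIndepFun
      (fun (q : Fin n × Fin p) ω => d q.1 q.2 ω) P)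
    (lamw lamf : ℝ) (hlamw : 0 < lamw) (hlamf : 0 < lamf)
    (Bb : Matrix (Fin n) (Fin p) ℝ) (hBb : ∀ i j, Bb i j = pq i j)
    (Bm : Ω → Matrix (Fin n) (Fin p) ℝ) (hBm : ∀ ω i j, Bm ω i j = d i j ω)
    (drow : Ω → Fin n → ℝ) (hdrowd : ∀ ω i, drow ω i = ∑ j, d i j ω)
    (dcol : Ω → Fin p → ℝ) (hdcold : ∀ ω j, dcol ω j = ∑ i, d i j ω)
    (dlw duw dlf duf Mw Mf gam : ℝ)
    (hdlw : dlw = Finset.univ.inf' ⟨⟨0, hK⟩, Finset.mem_univ _⟩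
      (fun a => Crow a / (nsize a : ℝ)))
    (hduw : duw = Finset.univ.sup' ⟨⟨0, hK⟩, Finset.mem_univ _⟩
      (fun a => Crow a / (nsize a : ℝ)))
    (hdlf : dlf = Finset.univ.inf' ⟨⟨0, hp⟩, Finset.mem_univ _⟩
      (fun j => θ j * Ccol (ll j)))
    (hduf : duf = Finset.univ.sup' ⟨⟨0, hp⟩, Finset.mem_univ _⟩
      (fun j => θ j * Ccol (ll j)))
    (hMw : Mw = 1 / (dlw + lamw)) (hMf : Mf = 1 / (dlf + lamf))
    (hgam : gam = (p : ℝ) / n)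
    (ε : ℝ) (hε : 0 < ε) (hεnp : ε < n + p)
    (hM : max Mw Mf ≤ 1 / (3 * Real.log ((n + p : ℝ) / ε)))
    (t : ℝ) (ht : t = Real.sqrt (3 * max Mw Mf * Real.log ((n + p : ℝ) / ε)))
    (Dhalf : Ω → Matrix (Fin p) (Fin p) ℝ)
    (hDhalf : ∀ ω, Dhalf ω =
      Matrix.diagonal (fun j => Real.sqrt (dcol ω j + lamf)) *
        Matrix.diagonal (fun j => 1 / Real.sqrt (θ j * Ccol (ll j) + lamf))) :
    (∀ j, P {ω | t ≤ |dcol ω j - θ j * Ccol (ll j)| / (θ j * Ccol (ll j) + lamf)} ≤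
      ENNReal.ofReal (2 * ε / (n + p))) ∧
    P {ω | 1 - Real.sqrt (1 - t) ≤ specNorm (1 - Dhalf ω)} ≤
      ENNReal.ofReal (2 * p * ε / (n + p)) ∧
    P {ω | Real.sqrt (1 + t) ≤ specNorm (Dhalf ω)} ≤
      ENNReal.ofReal (p * ε / (n + p)) :=
  stmt_11_general n p K hp kw ll nsize hnsize hnpos θ hθ C hC Ccol hCcol pq hpq P d hd01 hdmeas
    hdber hindep lamf hlamf dcol hdcold dlf Mw Mf hdlf hMf ε hε hM t ht Dhalf hDhalf
end

section
/- (In-sample bias of the ridge estimator.) Let W ∈ {0,1}^{N×n} and F ∈ {0,1}^{N×p} be indicator matrices (each row of W has exactly one entry equal to 1, and likewise for F), set B = W^⊤F, D_w = W^⊤W, D_f = F^⊤F, and fix λ_w, λ_f > 0, μ ∈ ℝ^n, φ ∈ ℝ^p. Let U be a random vector in ℝ^N with E U = 0, set Y = Wμ + Fφ + U, and define the ridge estimator (μ̂, φ̂) as the unique solution of the regularized normal equations ( (D_w + λ_w I_n, B); (B^⊤, D_f + λ_f I_p) ) (μ̂; φ̂) = (W^⊤Y; F^⊤Y). Then E(μ̂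 − μ) = L̃_{w,λ}^{-1} ( −λ_w μ + λ_f B D_{f,λ}^{-1} φ ) and E(φ̂ − φ) = L̃_{f,λ}^{-1} ( λ_w B^⊤ D_{w,λ}^{-1} μ − λ_f φ ), where D_{w,λ} = D_w + λ_w I_n, D_{f,λ} = D_f + λ_f I_p, L̃_{w,λ} = D_{w,λ} − B D_{f,λ}^{-1} B^⊤ and L̃_{f,λ} = D_{f,λ} − B^⊤ D_{w,λ}^{-1} B (all invertible since λ_w, λ_f > 0). -/
open Matrix MeasureTheory BigOperators

/-!
Subtracting the true parameters from the normal equations gives a block linear system for the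
errors `(μ̂ - μ, φ̂ - φ)` whose right-hand side is `(-λ_w μ, -λ_f φ)` plus a fixed linear image of
`U`. Its matrix is the Gram matrix of the design `[W F]` plus a positive diagonal, hence positive
definite, so its diagonal blocks and their Schur complements are invertible. Block elimination then
writes each error as a constant vector plus a matrix times `U`, and taking expectations removes the
noise term.
-/

namespace Matrix

variable {k m n : Type*} [Fintype k] [Fintype m] [Fintype n] [DecidableEq m] [DecidableEq n]

omit [DecidableEq m] in
theorem posDef_transpose_mul_self_add_diagonal (X : Matrix k n ℝ) {d : n → ℝ}
    (hd : ∀ i, 0 < d i) : (Xᵀ * X + diagonal d).PosDef :=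
  PosDef.posSemidef_add
    (by simpa only [conjTranspose_eq_transpose_of_trivial] using posSemidef_conjTranspose_mul_self X)
    (posDef_diagonal_iff.mpr hd)

omit [DecidableEq m] in
theorem posDef_transpose_mul_self_add_smul_one (X : Matrix k n ℝ) {a : ℝ} (ha : 0 < a) :
    (Xᵀ * X + a • 1).PosDef := by
  simpa only [smul_one_eq_diagonal] using posDef_transpose_mul_self_add_diagonal X fun _ => ha

theorem posDef_fromBlocks_transpose_mul_add_smul_one (X : Matrix k m ℝ) (G : Matrix k n ℝ)
    {a b : ℝ} (ha : 0 < a) (hb : 0 < b) :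
    (fromBlocks (Xᵀ * X + a • 1) (Xᵀ * G) (Gᵀ * X) (Gᵀ * G + b • 1)).PosDef := by
  convert posDef_transpose_mul_self_add_diagonal (fromCols X G)
    (d := Sum.elim (fun _ => a) fun _ => b) (by rintro (_ | _) <;> assumption)
  rw [transpose_fromCols, fromRows_mul_fromCols, ← fromBlocks_diagonal, fromBlocks_add]
  simp [smul_one_eq_diagonal]

theorem eq_inv_schur₂₂_mulVec {A : Matrix m m ℝ} {B : Matrix m n ℝ} {C : Matrix n m ℝ}
    {D : Matrix n n ℝ} [Invertible D] [Invertible (A - B * D⁻¹ * C)]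
    {x u : m → ℝ} {y v : n → ℝ}
    (h₁ : A *ᵥ x + B *ᵥ y = u) (h₂ : C *ᵥ x + D *ᵥ y = v) :
    x = (A - B * D⁻¹ * C)⁻¹ *ᵥ (u - B *ᵥ D⁻¹ *ᵥ v) := by
  have hy : y = D⁻¹ *ᵥ (v - C *ᵥ x) := (inv_mulVec_eq_vec (by rw [← h₂]; abel)).symm
  refine (inv_mulVec_eq_vec ?_).symm
  rw [← h₁, hy, mulVec_sub, mulVec_sub, sub_mulVec, ← mulVec_mulVec, ← mulVec_mulVec]
  abel

omit [DecidableEq n] in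
theorem sub_add_sub_eq_of_normal_eq {X : Matrix k m ℝ} {G : Matrix k n ℝ} {a : ℝ}
    {x μ : m → ℝ} {y φ : n → ℝ} {e : k → ℝ}
    (h : (Xᵀ * X + a • 1) *ᵥ x + (Xᵀ * G) *ᵥ y = Xᵀ *ᵥ (X *ᵥ μ + G *ᵥ φ + e)) :
    (Xᵀ * X + a • 1) *ᵥ (x - μ) + (Xᵀ * G) *ᵥ (y - φ) = -(a • μ) + Xᵀ *ᵥ e := by
  rw [mulVec_add, mulVec_add, mulVec_mulVec, mulVec_mulVec] at h
  rw [mulVec_sub, mulVec_sub, add_mulVec _ _ μ, smul_mulVec, one_mulVec]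
  linear_combination h

end Matrix

section

variable {Ω k m n : Type*} [Fintype k] [Fintype m] [Fintype n] [DecidableEq m] [DecidableEq n]
  [MeasurableSpace Ω] {P : Measure Ω} [IsProbabilityMeasure P]
  {U : Ω → k → ℝ} (hUint : ∀ s, Integrable (fun ω => U ω s) P) (hUmean : ∀ s, ∫ ω, U ω s ∂P = 0)
include hUint hUmean

omit [Fintype m] [DecidableEq m] [Fintype n] [DecidableEq n] in
theorem integral_add_mulVec_apply_of_integral_eq_zero (c : m → ℝ) (M : Matrix m k ℝ) (i : m) :
    ∫ ω, (c + M *ᵥ U ω) i ∂P = c i := by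
  simp only [Pi.add_apply, mulVec, dotProduct]
  rw [integral_add (integrable_const _) (integrable_finsetSum _ fun s _ => (hUint s).const_mul _),
    integral_finsetSum _ fun s _ => (hUint s).const_mul _]
  simp [integral_const_mul, hUmean]

theorem integral_apply_eq_inv_schur₂₂_mulVec {A : Matrix m m ℝ} {B : Matrix m n ℝ}
    {C : Matrix n m ℝ} {D : Matrix n n ℝ} [Invertible D] [Invertible (A - B * D⁻¹ * C)]
    {x : Ω → m → ℝ} {y : Ω → n → ℝ} {u : m → ℝ} {v : n → ℝ} {Mu : Matrix m k ℝ}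
    {Mv : Matrix n k ℝ} (h₁ : ∀ ω, A *ᵥ x ω + B *ᵥ y ω = u + Mu *ᵥ U ω)
    (h₂ : ∀ ω, C *ᵥ x ω + D *ᵥ y ω = v + Mv *ᵥ U ω) (i : m) :
    ∫ ω, x ω i ∂P = ((A - B * D⁻¹ * C)⁻¹ *ᵥ (u - B *ᵥ D⁻¹ *ᵥ v)) i := by
  refine (integral_congr_ae (.of_forall fun ω => ?_)).trans
    (integral_add_mulVec_apply_of_integral_eq_zero hUint hUmean _
      ((A - B * D⁻¹ * C)⁻¹ * (Mu - B * D⁻¹ * Mv)) i)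
  refine congrFun ((eq_inv_schur₂₂_mulVec (h₁ ω) (h₂ ω)).trans ?_) i
  simp only [mulVec_add, mulVec_sub, ← mulVec_mulVec, sub_mulVec]
  abel

theorem integral_apply_eq_inv_schur₁₁_mulVec {A : Matrix m m ℝ} {B : Matrix m n ℝ}
    {C : Matrix n m ℝ} {D : Matrix n n ℝ} [Invertible A] [Invertible (D - C * A⁻¹ * B)]
    {x : Ω → m → ℝ} {y : Ω → n → ℝ} {u : m → ℝ} {v : n → ℝ} {Mu : Matrix m k ℝ}
    {Mv : Matrix n k ℝ} (h₁ : ∀ ω, A *ᵥ x ω + B *ᵥ y ω = u + Mu *ᵥ U ω)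
    (h₂ : ∀ ω, C *ᵥ x ω + D *ᵥ y ω = v + Mv *ᵥ U ω) (j : n) :
    ∫ ω, y ω j ∂P = ((D - C * A⁻¹ * B)⁻¹ *ᵥ (v - C *ᵥ A⁻¹ *ᵥ u)) j :=
  integral_apply_eq_inv_schur₂₂_mulVec hUint hUmean
    (fun ω => add_comm (C *ᵥ x ω) _ ▸ h₂ ω) (fun ω => add_comm (A *ᵥ x ω) _ ▸ h₁ ω) j

end

theorem stmt_19_general (N n p : ℕ)
    (W : Matrix (Fin N) (Fin n) ℝ) (F : Matrix (Fin N) (Fin p) ℝ)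
    (B : Matrix (Fin n) (Fin p) ℝ) (hB : B = Wᵀ * F)
    (Dw : Matrix (Fin n) (Fin n) ℝ) (hDw : Dw = Wᵀ * W)
    (Df : Matrix (Fin p) (Fin p) ℝ) (hDf : Df = Fᵀ * F)
    (lamw lamf : ℝ) (hlamw : 0 < lamw) (hlamf : 0 < lamf)
    (μ : Fin n → ℝ) (φ : Fin p → ℝ)
    {Ω : Type} [MeasurableSpace Ω] (P : Measure Ω) [IsProbabilityMeasure P]
    (U : Ω → Fin N → ℝ)
    (hUint : ∀ s, Integrable (fun ω => U ω s) P)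
    (hUmean : ∀ s, ∫ ω, U ω s ∂P = 0)
    (Y : Ω → Fin N → ℝ) (hY : ∀ ω, Y ω = W.mulVec μ + F.mulVec φ + U ω)
    (muhat : Ω → Fin n → ℝ) (phihat : Ω → Fin p → ℝ)
    (hnormal1 : ∀ ω, (Dw + lamw • (1 : Matrix (Fin n) (Fin n) ℝ)).mulVec (muhat ω) +
      B.mulVec (phihat ω) = Wᵀ.mulVec (Y ω))
    (hnormal2 : ∀ ω, Bᵀ.mulVec (muhat ω) +
      (Df + lamf • (1 : Matrix (Fin p) (Fin p) ℝ)).mulVec (phihat ω) = Fᵀ.mulVec (Y ω)) :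
    (∀ i, ∫ ω, (muhat ω i - μ i) ∂P =
      (((Dw + lamw • (1 : Matrix (Fin n) (Fin n) ℝ)) -
          B * (Df + lamf • (1 : Matrix (Fin p) (Fin p) ℝ))⁻¹ * Bᵀ)⁻¹).mulVec
        (-(lamw • μ) +
          lamf • (B * (Df + lamf • (1 : Matrix (Fin p) (Fin p) ℝ))⁻¹).mulVec φ) i) ∧
    (∀ j, ∫ ω, (phihat ω j - φ j) ∂P =
      (((Df + lamf • (1 : Matrix (Fin p) (Fin p) ℝ)) -
          Bᵀ * (Dw + lamw • (1 : Matrix (Fin n) (Fin n) ℝ))⁻¹ * B)⁻¹).mulVec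
        (lamw • (Bᵀ * (Dw + lamw • (1 : Matrix (Fin n) (Fin n) ℝ))⁻¹).mulVec μ -
          lamf • φ) j) := by
  have hBt : Bᵀ = Fᵀ * W := by rw [hB, transpose_mul, transpose_transpose]
  subst hDw hDf
  have hK := posDef_fromBlocks_transpose_mul_add_smul_one W F hlamw hlamf
  rw [← hB, ← hBt] at hK
  let := (posDef_transpose_mul_self_add_smul_one W hlamw).isUnit.invertible
  let := (posDef_transpose_mul_self_add_smul_one F hlamf).isUnit.invertible
  have hSw := isUnit_fromBlocks_iff_of_invertible₂₂.mp hK.isUnit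
  have hSf := isUnit_fromBlocks_iff_of_invertible₁₁.mp hK.isUnit
  rw [invOf_eq_nonsing_inv] at hSw hSf
  let := hSw.invertible
  let := hSf.invertible
  have h₁ ω : (Wᵀ * W + lamw • 1) *ᵥ (muhat ω - μ) + B *ᵥ (phihat ω - φ) =
      -(lamw • μ) + Wᵀ *ᵥ U ω := by
    have := hnormal1 ω
    rw [hY, hB] at this
    rw [hB]
    exact sub_add_sub_eq_of_normal_eq this
  have h₂ ω : Bᵀ *ᵥ (muhat ω - μ) + (Fᵀ * F + lamf • 1) *ᵥ (phihat ω - φ) =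
      -(lamf • φ) + Fᵀ *ᵥ U ω := by
    have := hnormal2 ω
    rw [hY, add_comm (W *ᵥ μ), hBt, add_comm (_ *ᵥ muhat ω)] at this
    rw [hBt, add_comm (_ *ᵥ (muhat ω - μ))]
    exact sub_add_sub_eq_of_normal_eq this
  refine ⟨fun i => ?_, fun j => ?_⟩
  · refine (integral_apply_eq_inv_schur₂₂_mulVec hUint hUmean h₁ h₂ i).trans ?_
    simp only [mulVec_neg, mulVec_smul, mulVec_mulVec, sub_neg_eq_add, neg_add_eq_sub]
  · refine (integral_apply_eq_inv_schur₁₁_mulVec hUint hUmean h₁ h₂ j).trans ?_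
    simp only [mulVec_neg, mulVec_smul, mulVec_mulVec, sub_neg_eq_add, neg_add_eq_sub]

/-- In-sample bias of the ridge estimator: for indicator design
matrices `W`, `F`, noise `U` with mean zero, `Y = Wμ + Fφ + U`, and `(μ̂, φ̂)` the
solution of the regularized normal equations, one has
`E(μ̂ − μ) = L̃_{w,λ}^{-1}(−λ_w μ + λ_f B D_{f,λ}^{-1} φ)` and
`E(φ̂ − φ) = L̃_{f,λ}^{-1}(λ_w B^⊤ D_{w,λ}^{-1} μ − λ_f φ)`. -/
theorem stmt_19 (N n p : ℕ) (hN : 0 < N) (hn : 0 < n) (hp : 0 < p)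
    (W : Matrix (Fin N) (Fin n) ℝ) (F : Matrix (Fin N) (Fin p) ℝ)
    (hW01 : ∀ s i, W s i = 0 ∨ W s i = 1) (hWrow : ∀ s, ∑ i, W s i = 1)
    (hF01 : ∀ s j, F s j = 0 ∨ F s j = 1) (hFrow : ∀ s, ∑ j, F s j = 1)
    (B : Matrix (Fin n) (Fin p) ℝ) (hB : B = Wᵀ * F)
    (Dw : Matrix (Fin n) (Fin n) ℝ) (hDw : Dw = Wᵀ * W)
    (Df : Matrix (Fin p) (Fin p) ℝ) (hDf : Df = Fᵀ * F)
    (lamw lamf : ℝ) (hlamw : 0 < lamw) (hlamf : 0 < lamf)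
    (μ : Fin n → ℝ) (φ : Fin p → ℝ)
    {Ω : Type} [MeasurableSpace Ω] (P : Measure Ω) [IsProbabilityMeasure P]
    (U : Ω → Fin N → ℝ)
    (hUint : ∀ s, Integrable (fun ω => U ω s) P)
    (hUmean : ∀ s, ∫ ω, U ω s ∂P = 0)
    (Y : Ω → Fin N → ℝ) (hY : ∀ ω, Y ω = W.mulVec μ + F.mulVec φ + U ω)
    (muhat : Ω → Fin n → ℝ) (phihat : Ω → Fin p → ℝ)
    (hnormal1 : ∀ ω, (Dw + lamw • (1 : Matrix (Fin n) (Fin n) ℝ)).mulVec (muhat ω) +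
      B.mulVec (phihat ω) = Wᵀ.mulVec (Y ω))
    (hnormal2 : ∀ ω, Bᵀ.mulVec (muhat ω) +
      (Df + lamf • (1 : Matrix (Fin p) (Fin p) ℝ)).mulVec (phihat ω) = Fᵀ.mulVec (Y ω)) :
    (∀ i, ∫ ω, (muhat ω i - μ i) ∂P =
      (((Dw + lamw • (1 : Matrix (Fin n) (Fin n) ℝ)) -
          B * (Df + lamf • (1 : Matrix (Fin p) (Fin p) ℝ))⁻¹ * Bᵀ)⁻¹).mulVec
        (-(lamw • μ) +
          lamf • (B * (Df + lamf • (1 : Matrix (Fin p) (Fin p) ℝ))⁻¹).mulVec φ) i) ∧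
    (∀ j, ∫ ω, (phihat ω j - φ j) ∂P =
      (((Df + lamf • (1 : Matrix (Fin p) (Fin p) ℝ)) -
          Bᵀ * (Dw + lamw • (1 : Matrix (Fin n) (Fin n) ℝ))⁻¹ * B)⁻¹).mulVec
        (lamw • (Bᵀ * (Dw + lamw • (1 : Matrix (Fin n) (Fin n) ℝ))⁻¹).mulVec μ -
          lamf • φ) j) :=
  stmt_19_general N n p W F B hB Dw hDw Df hDf lamw lamf hlamw hlamf μ φ P U hUint hUmean Y hY muhat
    phihat hnormal1 hnormal2
end
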